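/- Let (X, d, μ) be an RD-space, p ∈ (1,∞), ω ∈ A_p(μ), and let φ : (0,∞) → (0,∞) be increasing and continuous satisfying (1.10): φ(r)/r ≤ C₁·φ(s)/s for all 0 < s ≤ r, and (1.11): ∫_t^∞ φ(s)/s² ds ≤ C₂·φ(t)/t for all t > 0. Then there exists a constant C > 0 such that for every ball B ⊆ X, ∑_{k=1}^∞ k·(φ(ω(2^k B))/ω(2^k B))^{1/p} ≤ C·(φ(ω(B))/ω(B))^{1/p}, where 2^k B denotes the ball concentric with B of 2^k times the radius. -/

import Mathlib

/-!
Write `ψ t = φ t / t` and `I t = ∫_t^∞ φ s / s² ds`. Since `φ` is increasing,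
`∫_t^{λt} φ s / s² ds ≥ (λ - 1) / λ² · ψ t`, while (1.11) says `I ≤ C₂ ψ`; hence
`I (λ t) ≤ θ I t` with `θ = C₂ / (C₂ + (λ - 1) / λ²) < 1`. Reverse doubling makes
`ω(2^k B) ≥ C₃^k ω(B)`, so with `λ = C₃` the quantity `ψ(ω(2^k B)) ≲ I(ω(2^k B))` decays like
`θ^k ψ(ω(B))`, and `∑ k θ^(k/p)` converges.
-/

open MeasureTheory Metric ENNReal

open Set

lemma hasSum_succ_mul_geometric {r : ℝ} (hr0 : 0 ≤ r) (hr1 : r < 1) :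
    HasSum (fun k : ℕ => ((k : ℝ) + 1) * r ^ (k + 1)) (r / (1 - r) ^ 2) := by
  have h := hasSum_coe_mul_geometric_of_norm_lt_one (r := r) (by rwa [Real.norm_of_nonneg hr0])
  rw [← hasSum_nat_add_iff' 1] at h
  simpa using h

lemma tsum_ofReal_succ_mul_le {a : ℕ → ℝ} {M r : ℝ} (hM : 0 ≤ M) (hr0 : 0 ≤ r) (hr1 : r < 1)
    (ha : ∀ k, a k ≤ M * r ^ k) :
    ∑' k : ℕ, ENNReal.ofReal (((k : ℝ) + 1) * a (k + 1))
      ≤ ENNReal.ofReal (M * (r / (1 - r) ^ 2)) := by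
  have hsum := (hasSum_succ_mul_geometric hr0 hr1).mul_left M
  calc ∑' k : ℕ, ENNReal.ofReal (((k : ℝ) + 1) * a (k + 1))
      ≤ ∑' k : ℕ, ENNReal.ofReal (M * (((k : ℝ) + 1) * r ^ (k + 1))) :=
        ENNReal.tsum_le_tsum fun k => ENNReal.ofReal_le_ofReal <| by
          rw [mul_left_comm]; exact mul_le_mul_of_nonneg_left (ha _) (by positivity)
    _ = ENNReal.ofReal (M * (r / (1 - r) ^ 2)) := by
        rw [← ENNReal.ofReal_tsum_of_nonneg (fun k => by positivity) hsum.summable, hsum.tsum_eq]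

lemma ofReal_le_setLIntegral_Ioc {φ : ℝ → ℝ} (hφpos : ∀ t, 0 < t → 0 < φ t)
    (hφmono : MonotoneOn φ (Ioi 0)) {t l : ℝ} (ht : 0 < t) (hl : 1 ≤ l) :
    ENNReal.ofReal ((l - 1) / l ^ 2 * (φ t / t))
      ≤ ∫⁻ s in Ioc t (l * t), ENNReal.ofReal (φ s / s ^ 2) := by
  have hbound : ∀ s ∈ Ioc t (l * t), ENNReal.ofReal (φ t / (l * t) ^ 2)
      ≤ ENNReal.ofReal (φ s / s ^ 2) := by
    rintro s ⟨hts, hsl⟩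
    have hs : 0 < s := ht.trans hts
    exact ENNReal.ofReal_le_ofReal (div_le_div₀ (hφpos s hs).le (hφmono ht hs hts.le)
      (by positivity) (pow_le_pow_left₀ hs.le hsl 2))
  calc ENNReal.ofReal ((l - 1) / l ^ 2 * (φ t / t))
      = ENNReal.ofReal (φ t / (l * t) ^ 2) * volume (Ioc t (l * t)) := by
        rw [Real.volume_Ioc, ← ENNReal.ofReal_mul' (by nlinarith)]
        congr 1
        field_simp
    _ = ∫⁻ _ in Ioc t (l * t), ENNReal.ofReal (φ t / (l * t) ^ 2) := (setLIntegral_const _ _).symm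
    _ ≤ ∫⁻ s in Ioc t (l * t), ENNReal.ofReal (φ s / s ^ 2) :=
        setLIntegral_mono' measurableSet_Ioc hbound

-- `toReal` is harmless below: (1.11) makes the integral finite.
noncomputable def tailIntegral (φ : ℝ → ℝ) (t : ℝ) : ℝ :=
  (∫⁻ s in Ioi t, ENNReal.ofReal (φ s / s ^ 2)).toReal

section TailIntegral

variable {φ : ℝ → ℝ} {C₂ : ℝ}

lemma pos_of_lintegral_Ioi_le (hφpos : ∀ t, 0 < t → 0 < φ t) (hφmono : MonotoneOn φ (Ioi 0))
    (h111 : ∀ t, 0 < t →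
      ∫⁻ s in Ioi t, ENNReal.ofReal (φ s / s ^ 2) ≤ ENNReal.ofReal (C₂ * (φ t / t))) :
    0 < C₂ := by
  by_contra! hC₂
  have h := (ofReal_le_setLIntegral_Ioc hφpos hφmono one_pos one_le_two).trans
    ((lintegral_mono_set Ioc_subset_Ioi_self).trans (h111 1 one_pos))
  rcases ENNReal.ofReal_le_ofReal_iff'.1 h with h | h <;> nlinarith [hφpos 1 one_pos]

lemma tailIntegral_le (hφpos : ∀ t, 0 < t → 0 < φ t) (hφmono : MonotoneOn φ (Ioi 0))
    (h111 : ∀ t, 0 < t →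
      ∫⁻ s in Ioi t, ENNReal.ofReal (φ s / s ^ 2) ≤ ENNReal.ofReal (C₂ * (φ t / t)))
    {t : ℝ} (ht : 0 < t) :
    tailIntegral φ t ≤ C₂ * (φ t / t) :=
  ENNReal.toReal_le_of_le_ofReal
    (mul_nonneg (pos_of_lintegral_Ioi_le hφpos hφmono h111).le (div_pos (hφpos t ht) ht).le)
    (h111 t ht)

lemma tailIntegral_antitoneOn
    (h111 : ∀ t, 0 < t →
      ∫⁻ s in Ioi t, ENNReal.ofReal (φ s / s ^ 2) ≤ ENNReal.ofReal (C₂ * (φ t / t)))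
    {t u : ℝ} (ht : 0 < t) (htu : t ≤ u) :
    tailIntegral φ u ≤ tailIntegral φ t :=
  ENNReal.toReal_mono ((h111 t ht).trans_lt ENNReal.ofReal_lt_top).ne
    (lintegral_mono_set (Ioi_subset_Ioi htu))

lemma tailIntegral_add_le (hφpos : ∀ t, 0 < t → 0 < φ t) (hφmono : MonotoneOn φ (Ioi 0))
    (h111 : ∀ t, 0 < t →
      ∫⁻ s in Ioi t, ENNReal.ofReal (φ s / s ^ 2) ≤ ENNReal.ofReal (C₂ * (φ t / t)))
    {t l : ℝ} (ht : 0 < t) (hl : 1 ≤ l) :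
    (l - 1) / l ^ 2 * (φ t / t) + tailIntegral φ (l * t) ≤ tailIntegral φ t := by
  have hsplit : ∫⁻ s in Ioi t, ENNReal.ofReal (φ s / s ^ 2)
      = (∫⁻ s in Ioc t (l * t), ENNReal.ofReal (φ s / s ^ 2))
        + ∫⁻ s in Ioi (l * t), ENNReal.ofReal (φ s / s ^ 2) := by
    rw [← lintegral_union measurableSet_Ioi (Ioc_disjoint_Ioi le_rfl),
      Ioc_union_Ioi_eq_Ioi (by nlinarith)]
  have hfin : ∫⁻ s in Ioi t, ENNReal.ofReal (φ s / s ^ 2) ≠ ⊤ :=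
    ((h111 t ht).trans_lt ENNReal.ofReal_lt_top).ne
  obtain ⟨hfin_Ioc, hfin_Ioi⟩ := ENNReal.add_ne_top.1 (hsplit ▸ hfin)
  rw [tailIntegral, tailIntegral, hsplit, ENNReal.toReal_add hfin_Ioc hfin_Ioi]
  exact add_le_add_left ((ENNReal.ofReal_le_iff_le_toReal hfin_Ioc).1
    (ofReal_le_setLIntegral_Ioc hφpos hφmono ht hl)) _

lemma tailIntegral_mul_le (hφpos : ∀ t, 0 < t → 0 < φ t) (hφmono : MonotoneOn φ (Ioi 0))
    (h111 : ∀ t, 0 < t →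
      ∫⁻ s in Ioi t, ENNReal.ofReal (φ s / s ^ 2) ≤ ENNReal.ofReal (C₂ * (φ t / t)))
    {t l : ℝ} (ht : 0 < t) (hl : 1 ≤ l) :
    tailIntegral φ (l * t) ≤ C₂ / (C₂ + (l - 1) / l ^ 2) * tailIntegral φ t := by
  set c := (l - 1) / l ^ 2
  have hc : 0 ≤ c := by positivity
  have hC₂ := pos_of_lintegral_Ioi_le hφpos hφmono h111
  have hadd := tailIntegral_add_le hφpos hφmono h111 ht hl
  have hle := tailIntegral_le hφpos hφmono h111 ht
  have hanti := tailIntegral_antitoneOn h111 ht (le_mul_of_one_le_left ht.le hl)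
  rw [div_mul_eq_mul_div, le_div_iff₀ (by positivity)]
  nlinarith

lemma ratio_le_of_growth (hφpos : ∀ t, 0 < t → 0 < φ t) (hφmono : MonotoneOn φ (Ioi 0))
    (h111 : ∀ t, 0 < t →
      ∫⁻ s in Ioi t, ENNReal.ofReal (φ s / s ^ 2) ≤ ENNReal.ofReal (C₂ * (φ t / t)))
    {l : ℝ} (hl : 1 < l) {W : ℕ → ℝ} (hW : ∀ k, 0 < W k) (hgrowth : ∀ k, l * W k ≤ W (k + 1))
    (n : ℕ) :
    φ (W n) / W n
      ≤ C₂ / ((l - 1) / l ^ 2) * (C₂ / (C₂ + (l - 1) / l ^ 2)) ^ n * (φ (W 0) / W 0) := by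
  set c := (l - 1) / l ^ 2
  set θ := C₂ / (C₂ + c)
  have hc : 0 < c := div_pos (by linarith) (by positivity)
  have hθ : 0 ≤ θ := by have := pos_of_lintegral_Ioi_le hφpos hφmono h111; positivity
  have hdecay : ∀ n, tailIntegral φ (W n) ≤ θ ^ n * tailIntegral φ (W 0) := by
    intro n
    induction n with
    | zero => simp
    | succ n ih =>
      calc tailIntegral φ (W (n + 1))
          ≤ tailIntegral φ (l * W n) :=
            tailIntegral_antitoneOn h111 (by nlinarith [hW n]) (hgrowth n)
        _ ≤ θ * tailIntegral φ (W n) := tailIntegral_mul_le hφpos hφmono h111 (hW n) hl.le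
        _ ≤ θ * (θ ^ n * tailIntegral φ (W 0)) := mul_le_mul_of_nonneg_left ih hθ
        _ = θ ^ (n + 1) * tailIntegral φ (W 0) := by ring
  have hlower : c * (φ (W n) / W n) ≤ tailIntegral φ (W n) :=
    le_of_add_le_of_nonneg_left (tailIntegral_add_le hφpos hφmono h111 (hW n) hl.le)
      ENNReal.toReal_nonneg
  rw [mul_comm c, ← le_div_iff₀ hc] at hlower
  calc φ (W n) / W n ≤ θ ^ n * tailIntegral φ (W 0) / c := hlower.trans (by gcongr; exact hdecay n)
    _ ≤ θ ^ n * (C₂ * (φ (W 0) / W 0)) / c := by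
        gcongr; exact tailIntegral_le hφpos hφmono h111 (hW 0)
    _ = C₂ / c * θ ^ n * (φ (W 0) / W 0) := by ring

end TailIntegral

lemma exists_tsum_le_of_growth {φ : ℝ → ℝ} {C₂ p l : ℝ} (hp : 0 < p)
    (hφpos : ∀ t, 0 < t → 0 < φ t) (hφmono : MonotoneOn φ (Ioi 0))
    (h111 : ∀ t, 0 < t →
      ∫⁻ s in Ioi t, ENNReal.ofReal (φ s / s ^ 2) ≤ ENNReal.ofReal (C₂ * (φ t / t)))
    (hl : 1 < l) :
    ∃ C : ℝ, 0 < C ∧ ∀ W : ℕ → ℝ, (∀ k, 0 < W k) → (∀ k, l * W k ≤ W (k + 1)) →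
      ∑' k : ℕ, ENNReal.ofReal (((k : ℝ) + 1) * (φ (W (k + 1)) / W (k + 1)) ^ (1 / p))
        ≤ ENNReal.ofReal (C * (φ (W 0) / W 0) ^ (1 / p)) := by
  set c := (l - 1) / l ^ 2
  set θ := C₂ / (C₂ + c)
  set K := C₂ / c
  have hc : 0 < c := div_pos (by linarith) (by positivity)
  have hC₂ := pos_of_lintegral_Ioi_le hφpos hφmono h111
  have hθ0 : 0 < θ := by positivity
  have hθ1 : θ < 1 := (div_lt_one (by positivity)).2 (by linarith)
  have hK : 0 < K := by positivity
  set r := θ ^ (1 / p)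
  have hr0 : 0 < r := by positivity
  have hr1 : r < 1 := Real.rpow_lt_one hθ0.le hθ1 (by positivity)
  refine ⟨K ^ (1 / p) * (r / (1 - r) ^ 2), by have := sub_pos.2 hr1; positivity, ?_⟩
  intro W hW hgrowth
  have hψ0 : 0 ≤ φ (W 0) / W 0 := (div_pos (hφpos _ (hW 0)) (hW 0)).le
  have hterm : ∀ k, (φ (W k) / W k) ^ (1 / p)
      ≤ K ^ (1 / p) * (φ (W 0) / W 0) ^ (1 / p) * r ^ k := by
    intro k
    calc (φ (W k) / W k) ^ (1 / p) ≤ (K * θ ^ k * (φ (W 0) / W 0)) ^ (1 / p) :=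
          Real.rpow_le_rpow (div_pos (hφpos _ (hW k)) (hW k)).le
            (ratio_le_of_growth hφpos hφmono h111 hl hW hgrowth k) (by positivity)
      _ = K ^ (1 / p) * (φ (W 0) / W 0) ^ (1 / p) * r ^ k := by
          rw [Real.mul_rpow (by positivity) hψ0, Real.mul_rpow hK.le (by positivity),
            Real.rpow_pow_comm hθ0.le]
          ring
  calc _ ≤ ENNReal.ofReal (K ^ (1 / p) * (φ (W 0) / W 0) ^ (1 / p) * (r / (1 - r) ^ 2)) :=
        tsum_ofReal_succ_mul_le (by positivity) hr0.le hr1 hterm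
    _ = _ := by ring_nf

theorem stmt6_general {X : Type*} [MetricSpace X] [MeasurableSpace X]
    (μ : Measure X)
    (p : ℝ) (hp : 1 < p)
    (ω : X → ℝ≥0∞)
    (hw : ∀ (x : X) (r : ℝ), 0 < r →
      0 < ∫⁻ y in ball x r, ω y ∂μ ∧ ∫⁻ y in ball x r, ω y ∂μ < ⊤)
    (C₃ C₄ : ℝ) (hC₃ : 1 < C₃)
    (hrd : ∀ (x : X) (r : ℝ), 0 < r →
      ENNReal.ofReal C₃ * ∫⁻ y in ball x r, ω y ∂μ ≤ ∫⁻ y in ball x (2 * r), ω y ∂μ ∧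
      ∫⁻ y in ball x (2 * r), ω y ∂μ ≤ ENNReal.ofReal C₄ * ∫⁻ y in ball x r, ω y ∂μ)
    (φ : ℝ → ℝ) (hφpos : ∀ t : ℝ, 0 < t → 0 < φ t)
    (hφmono : MonotoneOn φ (Set.Ioi 0))
    (C₂ : ℝ)
    (h111 : ∀ t : ℝ, 0 < t →
      ∫⁻ s in Set.Ioi t, ENNReal.ofReal (φ s / s ^ 2) ≤ ENNReal.ofReal (C₂ * (φ t / t))) :
    ∃ C : ℝ, 0 < C ∧ ∀ (x : X) (r : ℝ), 0 < r →
      ∑' k : ℕ, ENNReal.ofReal (((k : ℝ) + 1) *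
          (φ ((∫⁻ y in ball x (2 ^ (k + 1) * r), ω y ∂μ).toReal) /
            (∫⁻ y in ball x (2 ^ (k + 1) * r), ω y ∂μ).toReal) ^ (1 / p))
        ≤ ENNReal.ofReal (C *
            (φ ((∫⁻ y in ball x r, ω y ∂μ).toReal) /
              (∫⁻ y in ball x r, ω y ∂μ).toReal) ^ (1 / p)) := by
  obtain ⟨C, hC, hsum⟩ := exists_tsum_le_of_growth (zero_lt_one.trans hp) hφpos hφmono h111 hC₃
  refine ⟨C, hC, fun x r hr => ?_⟩
  set W : ℕ → ℝ := fun k => (∫⁻ y in ball x (2 ^ k * r), ω y ∂μ).toReal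
  have hW : ∀ k, 0 < W k := fun k =>
    ENNReal.toReal_pos (hw x _ (by positivity)).1.ne' (hw x _ (by positivity)).2.ne
  have hgrowth : ∀ k, C₃ * W k ≤ W (k + 1) := by
    intro k
    have h := (hrd x (2 ^ k * r) (by positivity)).1
    rw [← mul_assoc, ← pow_succ'] at h
    have h' := ENNReal.toReal_mono (hw x _ (by positivity)).2.ne h
    rwa [ENNReal.toReal_mul, ENNReal.toReal_ofReal (by linarith)] at h'
  simpa [W] using hsum W hW hgrowth

/-- Lemma 2.3: under conditions (1.10) and (1.11) on `φ` and `ω ∈ A_p(μ)` on an RD-space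
(so that `C₃ ω(B) ≤ ω(2B) ≤ C₄ ω(B)` with `C₃, C₄ > 1`), one has
`∑_{k≥1} k (φ(ω(2^k B))/ω(2^k B))^{1/p} ≤ C (φ(ω(B))/ω(B))^{1/p}`. -/
theorem stmt6 {X : Type*} [MetricSpace X] [MeasurableSpace X] [BorelSpace X]
    (μ : Measure X) (Cμ : ℝ≥0∞) (hCμ : Cμ ≠ ⊤)
    (hdoub : ∀ (x : X) (r : ℝ), μ (ball x (2 * r)) ≤ Cμ * μ (ball x r))
    (p p' : ℝ) (hp : 1 < p) (hpp' : 1 / p + 1 / p' = 1)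
    (ω : X → ℝ≥0∞) (hωm : Measurable ω)
    (A : ℝ≥0∞) (hA : A ≠ ⊤)
    (hAp : ∀ (x : X) (r : ℝ), 0 < r →
      ((μ (ball x r))⁻¹ * ∫⁻ y in ball x r, ω y ∂μ) *
        ((μ (ball x r))⁻¹ * ∫⁻ y in ball x r, ω y ^ (1 - p') ∂μ) ^ (p - 1) ≤ A)
    (hw : ∀ (x : X) (r : ℝ), 0 < r →
      0 < ∫⁻ y in ball x r, ω y ∂μ ∧ ∫⁻ y in ball x r, ω y ∂μ < ⊤)
    (C₃ C₄ : ℝ) (hC₃ : 1 < C₃) (hC₄ : 1 < C₄)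
    (hrd : ∀ (x : X) (r : ℝ), 0 < r →
      ENNReal.ofReal C₃ * ∫⁻ y in ball x r, ω y ∂μ ≤ ∫⁻ y in ball x (2 * r), ω y ∂μ ∧
      ∫⁻ y in ball x (2 * r), ω y ∂μ ≤ ENNReal.ofReal C₄ * ∫⁻ y in ball x r, ω y ∂μ)
    (φ : ℝ → ℝ) (hφpos : ∀ t : ℝ, 0 < t → 0 < φ t)
    (hφmono : MonotoneOn φ (Set.Ioi 0)) (hφcont : ContinuousOn φ (Set.Ioi 0))
    (C₁ C₂ : ℝ)
    (h110 : ∀ s r : ℝ, 0 < s → s ≤ r → φ r / r ≤ C₁ * (φ s / s))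
    (h111 : ∀ t : ℝ, 0 < t →
      ∫⁻ s in Set.Ioi t, ENNReal.ofReal (φ s / s ^ 2) ≤ ENNReal.ofReal (C₂ * (φ t / t))) :
    ∃ C : ℝ, 0 < C ∧ ∀ (x : X) (r : ℝ), 0 < r →
      ∑' k : ℕ, ENNReal.ofReal (((k : ℝ) + 1) *
          (φ ((∫⁻ y in ball x (2 ^ (k + 1) * r), ω y ∂μ).toReal) /
            (∫⁻ y in ball x (2 ^ (k + 1) * r), ω y ∂μ).toReal) ^ (1 / p))
        ≤ ENNReal.ofReal (C *
            (φ ((∫⁻ y in ball x r, ω y ∂μ).toReal) /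
              (∫⁻ y in ball x r, ω y ∂μ).toReal) ^ (1 / p)) :=
  stmt6_general μ p hp ω hw C₃ C₄ hC₃ hrd φ hφpos hφmono C₂ h111
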